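/- Assume for all x, y that Φ_{x,y}(0) = 0, Φ_{x,y} is nondecreasing on [0,∞), and (Φ2): the map t ↦ Φ_{x,y}(√t) is convex on [0,∞). Then for all measurable u, v : ℝ^N → ℝ one has I₁((u − v)/2) + I₁((u + v)/2) ≤ (1/2)·I₁(u) + (1/2)·I₁(v). -/

import Mathlib

open MeasureTheory Set Filter
open scoped ENNReal

noncomputable section

abbrev Eucl (N : ℕ) := EuclideanSpace ℝ (Fin N)

variable {N : ℕ}

/-- `Q = ℝ^{2N} \ (CΩ)^2`. -/
def Qset (Ω : Set (Eucl N)) : Set (Eucl N × Eucl N) := (Ωᶜ ×ˢ Ωᶜ)ᶜ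

/-- the functional `I₁` (with values in `[0,∞]`). -/
def Ifun (Φ : Eucl N → Eucl N → ℝ → ℝ) (s : ℝ) (Ω : Set (Eucl N)) (β : Eucl N → ℝ)
    (u : Eucl N → ℝ) : ℝ≥0∞ :=
  (1/2) * (∫⁻ p in Qset Ω, ENNReal.ofReal
      (Φ p.1 p.2 (|u p.1 - u p.2| / dist p.1 p.2 ^ s) / dist p.1 p.2 ^ (N : ℝ)))
    + (∫⁻ x in Ω, ENNReal.ofReal (Φ x x |u x|))
    + ∫⁻ x in Ωᶜ, ENNReal.ofReal (β x * Φ x x |u x|)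

/-!
Put `ψ t = φ √t`. Convexity of `ψ` with `ψ 0 = 0` makes `ψ` superadditive, so by the
parallelogram law
`φ |(a - b)/2| + φ |(a + b)/2| ≤ ψ ((a ^ 2 + b ^ 2) / 2) ≤ (φ |a| + φ |b|) / 2`
(Clarkson's inequality). Each of the three terms of `I₁` is a modular `∫ F(a, |f a|) dμ` whose
`F(a, ·)` is again of this kind (for the nonlocal term `f (x, y) = u x - u y` and `Φ_{x,y}` is
rescaled by powers of `|x - y|`), so integrating the pointwise inequality gives the claim.
Measurability of the integrands holds because `F` is a Carathéodory function: convexity forces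
each `F(a, ·)` to be continuous on `[0, ∞)`.
-/

open Topology

section ConvexOnIci

variable {ψ : ℝ → ℝ}

lemma ConvexOn.map_mul_le_mul_of_map_zero (hψ : ConvexOn ℝ (Ici 0) ψ) (h0 : ψ 0 = 0)
    {t x : ℝ} (ht₀ : 0 ≤ t) (ht₁ : t ≤ 1) (hx : 0 ≤ x) : ψ (t * x) ≤ t * ψ x := by
  simpa [h0] using
    hψ.2 (mem_Ici.2 hx) (mem_Ici.2 le_rfl) ht₀ (sub_nonneg.2 ht₁) (add_sub_cancel t 1)

lemma ConvexOn.add_le_map_add_of_map_zero (hψ : ConvexOn ℝ (Ici 0) ψ) (h0 : ψ 0 = 0)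
    {x y : ℝ} (hx : 0 ≤ x) (hy : 0 ≤ y) : ψ x + ψ y ≤ ψ (x + y) := by
  rcases (add_nonneg hx hy).eq_or_lt with hxy | hxy
  · obtain ⟨rfl, rfl⟩ : x = 0 ∧ y = 0 := ⟨by linarith, by linarith⟩
    simp [h0]
  · have hle : ∀ z, 0 ≤ z → z ≤ x + y → ψ z ≤ z / (x + y) * ψ (x + y) := fun z hz hzs => by
      simpa [div_mul_cancel₀ z hxy.ne'] using
        hψ.map_mul_le_mul_of_map_zero h0 (div_nonneg hz hxy.le) ((div_le_one hxy).2 hzs) hxy.le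
    calc ψ x + ψ y ≤ x / (x + y) * ψ (x + y) + y / (x + y) * ψ (x + y) :=
          add_le_add (hle x hx (by linarith)) (hle y hy (by linarith))
      _ = ψ (x + y) := by field_simp

/-- At `0`, continuity comes from the squeeze `0 ≤ ψ t ≤ t * ψ 1`. -/
lemma ConvexOn.continuousOn_Ici_of_map_zero (hψ : ConvexOn ℝ (Ici 0) ψ) (h0 : ψ 0 = 0)
    (hnn : ∀ t, 0 ≤ t → 0 ≤ ψ t) : ContinuousOn ψ (Ici 0) := by
  refine hψ.continuousOn_Ici ?_
  rw [ContinuousWithinAt, h0]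
  have hlin : Tendsto (fun t => t * ψ 1) (𝓝[Ici 0] 0) (𝓝 0) := by
    simpa using ((continuous_mul_const (ψ 1)).tendsto 0).mono_left nhdsWithin_le_nhds
  refine tendsto_of_tendsto_of_tendsto_of_le_of_le' tendsto_const_nhds hlin ?_ ?_
  · filter_upwards [self_mem_nhdsWithin] with t ht using hnn t ht
  · filter_upwards [self_mem_nhdsWithin, nhdsWithin_le_nhds (Iic_mem_nhds one_pos)]
      with t ht ht₁
    simpa using hψ.map_mul_le_mul_of_map_zero h0 ht ht₁ zero_le_one

end ConvexOnIci

/-- The hypotheses on each `Φ_{x,y}`, including (Φ2). -/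
structure SqrtConvex (φ : ℝ → ℝ) : Prop where
  map_zero : φ 0 = 0
  nonneg : ∀ t, 0 ≤ t → 0 ≤ φ t
  convexOn_sqrt : ConvexOn ℝ (Ici 0) fun t => φ √t

namespace SqrtConvex

variable {φ : ℝ → ℝ}

lemma continuous_comp_abs (hφ : SqrtConvex φ) : Continuous fun t => φ |t| := by
  have hψ : ContinuousOn (fun t => φ √t) (Ici 0) :=
    hφ.convexOn_sqrt.continuousOn_Ici_of_map_zero (by simp [hφ.map_zero])
      fun t _ => hφ.nonneg _ (Real.sqrt_nonneg t)
  simpa only [Function.comp_def, Real.sqrt_sq_eq_abs] using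
    hψ.comp_continuous (continuous_pow 2) sq_nonneg

theorem clarkson (hφ : SqrtConvex φ) (a b : ℝ) :
    φ |(a - b) / 2| + φ |(a + b) / 2| ≤ (φ |a| + φ |b|) / 2 := by
  have hψ := hφ.convexOn_sqrt
  have hψ0 : φ √0 = 0 := by simp [hφ.map_zero]
  simp only [← Real.sqrt_sq_eq_abs]
  calc φ √(((a - b) / 2) ^ 2) + φ √(((a + b) / 2) ^ 2)
      ≤ φ √(((a - b) / 2) ^ 2 + ((a + b) / 2) ^ 2) :=
        hψ.add_le_map_add_of_map_zero hψ0 (sq_nonneg _) (sq_nonneg _)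
    _ = φ √((1 / 2 : ℝ) • a ^ 2 + (1 / 2 : ℝ) • b ^ 2) := by
        congr 2; simp only [smul_eq_mul]; ring
    _ ≤ (1 / 2 : ℝ) • φ √(a ^ 2) + (1 / 2 : ℝ) • φ √(b ^ 2) :=
        hψ.2 (sq_nonneg a) (sq_nonneg b) (by norm_num) (by norm_num) (by norm_num)
    _ = (φ √(a ^ 2) + φ √(b ^ 2)) / 2 := by simp only [smul_eq_mul]; ring

theorem ofReal_clarkson (hφ : SqrtConvex φ) (a b : ℝ) :
    ENNReal.ofReal (φ |(a - b) / 2|) + ENNReal.ofReal (φ |(a + b) / 2|)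
      ≤ 2⁻¹ * (ENNReal.ofReal (φ |a|) + ENNReal.ofReal (φ |b|)) := by
  have hnn : ∀ x, 0 ≤ φ |x| := fun x => hφ.nonneg _ (abs_nonneg x)
  calc ENNReal.ofReal (φ |(a - b) / 2|) + ENNReal.ofReal (φ |(a + b) / 2|)
      = ENNReal.ofReal (φ |(a - b) / 2| + φ |(a + b) / 2|) :=
        (ENNReal.ofReal_add (hnn _) (hnn _)).symm
    _ ≤ ENNReal.ofReal (2⁻¹ * (φ |a| + φ |b|)) :=
        ENNReal.ofReal_le_ofReal ((hφ.clarkson a b).trans_eq (by ring))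
    _ = 2⁻¹ * (ENNReal.ofReal (φ |a|) + ENNReal.ofReal (φ |b|)) := by
        rw [ENNReal.ofReal_mul (by norm_num), ENNReal.ofReal_add (hnn a) (hnn b),
          ENNReal.ofReal_inv_of_pos two_pos, ENNReal.ofReal_ofNat]

lemma const_mul (hφ : SqrtConvex φ) {c : ℝ} (hc : 0 ≤ c) : SqrtConvex fun t => c * φ t :=
  ⟨by simp [hφ.map_zero], fun t ht => mul_nonneg hc (hφ.nonneg t ht), hφ.convexOn_sqrt.smul hc⟩

lemma div_const (hφ : SqrtConvex φ) {c : ℝ} (hc : 0 ≤ c) : SqrtConvex fun t => φ t / c := by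
  simpa only [div_eq_inv_mul] using hφ.const_mul (inv_nonneg.2 hc)

lemma comp_div (hφ : SqrtConvex φ) {c : ℝ} (hc : 0 ≤ c) : SqrtConvex fun t => φ (t / c) where
  map_zero := by simp [hφ.map_zero]
  nonneg t ht := hφ.nonneg _ (div_nonneg ht hc)
  convexOn_sqrt := by
    refine ((hφ.convexOn_sqrt.comp_linearMap ((c ^ 2)⁻¹ • LinearMap.id)).subset
      (fun t (ht : 0 ≤ t) => ?_) (convex_Ici 0)).congr fun t _ => ?_
    · simp only [mem_preimage, LinearMap.smul_apply, LinearMap.id_apply, smul_eq_mul, mem_Ici]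
      positivity
    · simp only [Function.comp_apply, LinearMap.smul_apply, LinearMap.id_apply, smul_eq_mul]
      rw [← div_eq_inv_mul, Real.sqrt_div' _ (sq_nonneg c), Real.sqrt_sq hc]

end SqrtConvex

lemma measurable_comp_abs_of_sqrtConvex {α : Type*} [MeasurableSpace α] {F : α → ℝ → ℝ}
    (hF : ∀ a, SqrtConvex (F a)) (hFm : ∀ t, Measurable fun a => F a t) {h : α → ℝ}
    (hh : Measurable h) : Measurable fun a => F a |h a| :=
  (measurable_uncurry_of_continuous_of_measurable (u := fun t a => F a |t|)
    (fun a => (hF a).continuous_comp_abs) fun t => hFm |t|).comp (hh.prodMk measurable_id)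

section Modular

variable {α : Type*} [MeasurableSpace α]

def modular (μ : Measure α) (F : α → ℝ → ℝ) (f : α → ℝ) : ℝ≥0∞ :=
  ∫⁻ a, ENNReal.ofReal (F a |f a|) ∂μ

theorem modular_clarkson {μ : Measure α} {F : α → ℝ → ℝ} (hF : ∀ᵐ a ∂μ, SqrtConvex (F a))
    {f g : α → ℝ} (hf : AEMeasurable (fun a => ENNReal.ofReal (F a |f a|)) μ) :
    modular μ F (fun a => (f a - g a) / 2) + modular μ F (fun a => (f a + g a) / 2)
      ≤ 2⁻¹ * modular μ F f + 2⁻¹ * modular μ F g := by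
  unfold modular
  calc _ ≤ ∫⁻ a, ENNReal.ofReal (F a |(f a - g a) / 2|)
          + ENNReal.ofReal (F a |(f a + g a) / 2|) ∂μ := le_lintegral_add _ _
    _ ≤ ∫⁻ a, 2⁻¹ * (ENNReal.ofReal (F a |f a|) + ENNReal.ofReal (F a |g a|)) ∂μ :=
        lintegral_mono_ae (hF.mono fun a ha => ha.ofReal_clarkson _ _)
    _ = _ := by rw [lintegral_const_mul' _ _ (by simp), lintegral_add_left' hf, mul_add]

end Modular

lemma Ifun_eq_modular (Φ : Eucl N → Eucl N → ℝ → ℝ) (s : ℝ) (Ω : Set (Eucl N))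
    (β : Eucl N → ℝ) (w : Eucl N → ℝ) :
    Ifun Φ s Ω β w =
      2⁻¹ * modular (volume.restrict (Qset Ω))
          (fun p t => Φ p.1 p.2 (t / dist p.1 p.2 ^ s) / dist p.1 p.2 ^ (N : ℝ))
          (fun p => w p.1 - w p.2)
        + modular (volume.restrict Ω) (fun x => Φ x x) w
        + modular (volume.restrict Ωᶜ) (fun x t => β x * Φ x x t) w := by
  rw [Ifun, one_div]
  rfl

theorem statement10_general
    (N : ℕ)
    (Ω : Set (Eucl N))
    (s : ℝ)
    (Φ : Eucl N → Eucl N → ℝ → ℝ)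
    (hΦmeas : ∀ t : ℝ, Measurable fun p : Eucl N × Eucl N => Φ p.1 p.2 t)
    (hΦnn : ∀ x y t, 0 ≤ t → 0 ≤ Φ x y t)
    (hΦ0 : ∀ x y : Eucl N, Φ x y 0 = 0)
    (hΦ2 : ∀ x y : Eucl N, ConvexOn ℝ (Set.Ici 0) fun t => Φ x y (Real.sqrt t))
    (β : Eucl N → ℝ) (hβm : Measurable β)
    (hβ0 : ∀ᵐ x ∂(volume.restrict Ωᶜ), 0 ≤ β x)
    (u v : Eucl N → ℝ) (hu : Measurable u) :
    Ifun Φ s Ω β (fun x => (u x - v x) / 2) + Ifun Φ s Ω β (fun x => (u x + v x) / 2) ≤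
      (1/2) * Ifun Φ s Ω β u + (1/2) * Ifun Φ s Ω β v := by
  have hΦ : ∀ x y, SqrtConvex (Φ x y) := fun x y => ⟨hΦ0 x y, hΦnn x y, hΦ2 x y⟩
  have hdist : Measurable fun p : Eucl N × Eucl N => dist p.1 p.2 := continuous_dist.measurable
  have hA_meas : Measurable fun p : Eucl N × Eucl N =>
      Φ p.1 p.2 (|u p.1 - u p.2| / dist p.1 p.2 ^ s) / dist p.1 p.2 ^ (N : ℝ) := by
    have h := measurable_comp_abs_of_sqrtConvex (fun p => hΦ p.1 p.2) hΦmeas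
      (h := fun p : Eucl N × Eucl N => (u p.1 - u p.2) / dist p.1 p.2 ^ s) (by fun_prop)
    simp only [abs_div, abs_of_nonneg (Real.rpow_nonneg dist_nonneg _)] at h
    exact h.div (hdist.pow_const _)
  have hB_meas : Measurable fun x => Φ x x |u x| :=
    measurable_comp_abs_of_sqrtConvex (fun x => hΦ x x)
      (fun t => (hΦmeas t).comp (measurable_id.prodMk measurable_id)) hu
  have hA := modular_clarkson (μ := volume.restrict (Qset Ω))
    (f := fun p => u p.1 - u p.2) (g := fun p => v p.1 - v p.2)
    (ae_of_all _ fun p => ((hΦ p.1 p.2).comp_div (Real.rpow_nonneg dist_nonneg s)).div_const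
      (Real.rpow_nonneg dist_nonneg _)) hA_meas.ennreal_ofReal.aemeasurable
  have hB := modular_clarkson (μ := volume.restrict Ω) (g := v) (ae_of_all _ fun x => hΦ x x)
    hB_meas.ennreal_ofReal.aemeasurable
  have hC := modular_clarkson (μ := volume.restrict Ωᶜ) (F := fun x t => β x * Φ x x t) (g := v)
    (hβ0.mono fun x hx => (hΦ x x).const_mul hx) (hβm.mul hB_meas).ennreal_ofReal.aemeasurable
  have hsub : (fun p : Eucl N × Eucl N => (u p.1 - v p.1) / 2 - (u p.2 - v p.2) / 2) =
      fun p => (u p.1 - u p.2 - (v p.1 - v p.2)) / 2 := by funext; ring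
  have hadd : (fun p : Eucl N × Eucl N => (u p.1 + v p.1) / 2 - (u p.2 + v p.2) / 2) =
      fun p => (u p.1 - u p.2 + (v p.1 - v p.2)) / 2 := by funext; ring
  simp only [Ifun_eq_modular, hsub, hadd, one_div]
  have hsum := add_le_add (add_le_add (mul_le_mul_right hA 2⁻¹) hB) hC
  exact ((by ring : _ = _).trans_le hsum).trans_eq (by ring)

/-- convexity-type inequality for `I₁` under condition (Φ2). -/
theorem statement10
    (N : ℕ) (hN : 1 ≤ N)
    (Ω : Set (Eucl N)) (hΩo : IsOpen Ω) (hΩb : Bornology.IsBounded Ω) (hΩne : Ω.Nonempty)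
    (s : ℝ) (hs : s ∈ Set.Ioo (0:ℝ) 1)
    (Φ : Eucl N → Eucl N → ℝ → ℝ)
    (hΦmeas : ∀ t : ℝ, Measurable fun p : Eucl N × Eucl N => Φ p.1 p.2 t)
    (hΦnn : ∀ x y t, 0 ≤ t → 0 ≤ Φ x y t)
    (hΦ0 : ∀ x y : Eucl N, Φ x y 0 = 0)
    (hΦmono : ∀ x y : Eucl N, MonotoneOn (Φ x y) (Set.Ici 0))
    (hΦ2 : ∀ x y : Eucl N, ConvexOn ℝ (Set.Ici 0) fun t => Φ x y (Real.sqrt t))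
    (β : Eucl N → ℝ) (hβm : Measurable β)
    (hβb : ∃ C : ℝ, ∀ᵐ x ∂(volume.restrict Ωᶜ), |β x| ≤ C)
    (hβ0 : ∀ᵐ x ∂(volume.restrict Ωᶜ), 0 ≤ β x)
    (u v : Eucl N → ℝ) (hu : Measurable u) (hv : Measurable v) :
    Ifun Φ s Ω β (fun x => (u x - v x) / 2) + Ifun Φ s Ω β (fun x => (u x + v x) / 2) ≤
      (1/2) * Ifun Φ s Ω β u + (1/2) * Ifun Φ s Ω β v :=
  statement10_general N Ω s Φ hΦmeas hΦnn hΦ0 hΦ2 β hβm hβ0 u v hu
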